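/- arXiv:2210.05120 — 2 statements merged into one kernel-verified Lean document; each statement's English description precedes it below -/
import Mathlib

section
/- Let A be an Artin algebra and let 0 → M_n → M_{n-1} → ⋯ → M_0 → X → 0 be an exact sequence of finitely generated A-modules. Then X belongs to [M_0]₁ • [Ω^{-1}(M₁)]₁ • ⋯ • [Ω^{-n}(M_n)]₁; in particular X ∈ [⊕_{i=0}^n Ω^{-i}(M_i)]_{n+1}. -/
universe u

open CategoryTheory

namespace Paper

variable (A : Type u) [Ring A]

/-- `X` belongs to `add 𝒮`: it is a direct summand of a finite direct sum of members of `𝒮`. -/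
def memAdd (S : Set (ModuleCat.{u} A)) (X : ModuleCat.{u} A) : Prop :=
  ∃ (n : ℕ) (M : Fin n → ModuleCat.{u} A) (Y : ModuleCat.{u} A),
    (∀ i, M i ∈ S) ∧ Nonempty ((X × Y) ≃ₗ[A] ((i : Fin n) → M i))

/-- `add T` for a single module `T`. -/
def addOf (T : ModuleCat.{u} A) : Set (ModuleCat.{u} A) :=
  {X | memAdd A {T} X}

/-- `0 → X → Y → Z → 0` is a short exact sequence. -/
def IsSES {X Y Z : ModuleCat.{u} A} (f : X →ₗ[A] Y) (g : Y →ₗ[A] Z) : Prop :=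
  Function.Injective f ∧ Function.Surjective g ∧ LinearMap.range f = LinearMap.ker g

/-- The extension product `𝒮 • 𝒯` of two classes of modules. -/
def bullet (S T : Set (ModuleCat.{u} A)) : Set (ModuleCat.{u} A) :=
  {X | memAdd A {W | Module.Finite A W ∧
    ∃ (T₁ T₂ : ModuleCat.{u} A) (f : T₁ →ₗ[A] W) (g : W →ₗ[A] T₂),
      T₁ ∈ S ∧ T₂ ∈ T ∧ IsSES A f g} X}

/-- `[T]ₙ`. -/
def bracket (T : ModuleCat.{u} A) : ℕ → Set (ModuleCat.{u} A)
  | 0 => {X | Subsingleton X}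
  | 1 => addOf A T
  | (n+2) => bullet A (addOf A T) (bracket T (n+1))

/-- The extension dimension of `A`. -/
noncomputable def extDim : ℕ∞ :=
  sInf {d : ℕ∞ | ∃ n : ℕ, d = n ∧ ∃ T : ModuleCat.{u} A, Module.Finite A T ∧
    ∀ X : ModuleCat.{u} A, Module.Finite A X → X ∈ bracket A T (n + 1)}

/-- There is an exact sequence `0 → M_n → ⋯ → M_0 → X → 0` with all `M_i ∈ add M`. -/
def ResLen (M : ModuleCat.{u} A) : ModuleCat.{u} A → ℕ → Prop
  | X, 0 => X ∈ addOf A M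
  | X, (n+1) => ∃ (M₀ : ModuleCat.{u} A) (g : M₀ →ₗ[A] X),
      M₀ ∈ addOf A M ∧ Function.Surjective g ∧
        ResLen M (ModuleCat.of A (LinearMap.ker g)) n

/-- `M`-wrd(X) ≤ n : there is an exact sequence `0 → M_n → ⋯ → M_0 → X ⊕ Y → 0`
with all `M_i ∈ add M`. -/
def wrdLE (M X : ModuleCat.{u} A) (n : ℕ) : Prop :=
  ∃ Y : ModuleCat.{u} A, Module.Finite A Y ∧ ResLen A M (ModuleCat.of A (X × Y)) n

/-- The weak `M`-resolution dimension of `X`. -/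
noncomputable def wrdMod (M X : ModuleCat.{u} A) : ℕ∞ :=
  sInf {d : ℕ∞ | ∃ n : ℕ, d = n ∧ wrdLE A M X n}

/-- The weak `M`-resolution dimension of the algebra `A`. -/
noncomputable def wrdAlg (M : ModuleCat.{u} A) : ℕ∞ :=
  sSup {d : ℕ∞ | ∃ X : ModuleCat.{u} A, Module.Finite A X ∧ d = wrdMod A M X}

/-- The weak resolution dimension of `A`. -/
noncomputable def wrd : ℕ∞ :=
  sInf {d : ℕ∞ | ∃ M : ModuleCat.{u} A, Module.Finite A M ∧ d = wrdAlg A M}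

end Paper

/-- A cosyzygy operator: `Cos M` is (up to isomorphism) the cokernel of an
injective envelope `M → I`, for every finitely generated module `M`. -/
def Paper.IsCosyzygyOp (A : Type u) [Ring A]
    (Cos : ModuleCat.{u} A → ModuleCat.{u} A) : Prop :=
  ∀ M : ModuleCat.{u} A, Module.Finite A M →
    ∃ (I : ModuleCat.{u} A) (ι : M →ₗ[A] I),
      Module.Finite A I ∧ Module.Injective A I ∧ Function.Injective ι ∧
      (∀ N : Submodule A I, N ⊓ LinearMap.range ι = ⊥ → N = ⊥) ∧
      Nonempty (Cos M ≃ₗ[A] (I ⧸ LinearMap.range ι))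

/-- The iterated extension product `𝒮₀ • 𝒮₁ • ⋯ • 𝒮ₙ`. -/
def Paper.bulletChain (A : Type u) [Ring A] :
    (ℕ → Set (ModuleCat.{u} A)) → ℕ → Set (ModuleCat.{u} A)
  | S, 0 => {X | Paper.memAdd A (S 0) X}
  | S, (n+1) => Paper.bullet A (S 0) (Paper.bulletChain A (fun i => S (i+1)) n)

open LinearMap Submodule
namespace Aux
variable {A : Type u} [Ring A]

/-- linear equiv between two subsingleton modules -/
def eqvSubsingleton (M N : Type u) [AddCommGroup M] [Module A M] [AddCommGroup N] [Module A N]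
    [Subsingleton M] [Subsingleton N] : M ≃ₗ[A] N where
  toFun _ := 0
  invFun _ := 0
  map_add' _ _ := Subsingleton.elim _ _
  map_smul' _ _ := Subsingleton.elim _ _
  left_inv _ := Subsingleton.elim _ _
  right_inv _ := Subsingleton.elim _ _

/-- split lemma: a retract decomposes the middle as a product -/
noncomputable def splitEquiv {X W : Type u} [AddCommGroup X] [Module A X] [AddCommGroup W]
    [Module A W] (s : X →ₗ[A] W) (p : W →ₗ[A] X) (h : ∀ x, p (s x) = x) :
    (X × LinearMap.ker p) ≃ₗ[A] W where
  toFun q := s q.1 + q.2.1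
  map_add' a b := by
    simp only [Prod.fst_add, map_add, Submodule.coe_add, Prod.snd_add]
    abel
  map_smul' a b := by
    simp only [Prod.smul_fst, map_smul, RingHom.id_apply, Prod.smul_snd, SetLike.val_smul,
      smul_add]
  invFun w := (p w, ⟨w - s (p w), by simp [LinearMap.mem_ker, h]⟩)
  left_inv q := by
    have hq : p q.2.1 = 0 := q.2.2
    ext
    · simp [h, hq]
    · simp [h, hq]
  right_inv w := by simp

/-- product of pi's -/
def piProd {m : ℕ} (B C : Fin m → Type u) [∀ i, AddCommGroup (B i)] [∀ i, Module A (B i)]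
    [∀ i, AddCommGroup (C i)] [∀ i, Module A (C i)] :
    (∀ i, B i × C i) ≃ₗ[A] (∀ i, B i) × (∀ i, C i) where
  toFun f := (fun i => (f i).1, fun i => (f i).2)
  map_add' _ _ := rfl
  map_smul' _ _ := rfl
  invFun p := fun i => (p.1 i, p.2 i)
  left_inv f := rfl
  right_inv p := rfl

/-- peeling off the first factor of a pi over `Fin (m+1)` -/
def piSucc {m : ℕ} (φ : Fin (m+1) → Type u) [∀ i, AddCommGroup (φ i)] [∀ i, Module A (φ i)] :
    (∀ i, φ i) ≃ₗ[A] φ 0 × (∀ i : Fin m, φ i.succ) where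
  toFun f := (f 0, fun i => f i.succ)
  map_add' _ _ := rfl
  map_smul' _ _ := rfl
  invFun p := Fin.cons p.1 p.2
  left_inv f := by
    funext i
    induction i using Fin.cases with
    | zero => simp
    | succ i => simp
  right_inv p := by
    ext
    · simp
    · simp

def piUniqueLin {ι : Type} [Unique ι] (φ : ι → Type u) [∀ i, AddCommGroup (φ i)]
    [∀ i, Module A (φ i)] : (∀ i, φ i) ≃ₗ[A] φ default :=
  { Equiv.piUnique φ with
    map_add' := fun _ _ => rfl
    map_smul' := fun _ _ => rfl }

end Aux

namespace Aux
open Paper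
variable {A : Type u} [Ring A]

theorem memAdd_mono {S S' : Set (ModuleCat.{u} A)} (h : S ⊆ S') {X : ModuleCat.{u} A}
    (hX : memAdd A S X) : memAdd A S' X := by
  obtain ⟨n, M, Y, hM, he⟩ := hX
  exact ⟨n, M, Y, fun i => h (hM i), he⟩

theorem memAdd_of_equiv {S : Set (ModuleCat.{u} A)} {X X' : ModuleCat.{u} A}
    (e : (X : Type u) ≃ₗ[A] (X' : Type u)) (hX : memAdd A S X) : memAdd A S X' := by
  obtain ⟨n, M, Y, hM, ⟨f⟩⟩ := hX
  exact ⟨n, M, Y, hM, ⟨(e.symm.prodCongr (LinearEquiv.refl A Y)).trans f⟩⟩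

def prodPUnitEquiv (M : Type u) [AddCommGroup M] [Module A M] :
    (M × PUnit.{u+1}) ≃ₗ[A] M where
  toFun p := p.1
  map_add' _ _ := rfl
  map_smul' _ _ := rfl
  invFun m := (m, PUnit.unit)
  left_inv p := rfl
  right_inv m := rfl

theorem memAdd_self {S : Set (ModuleCat.{u} A)} {W : ModuleCat.{u} A} (h : W ∈ S) :
    memAdd A S W := by
  refine ⟨1, fun _ => W, ModuleCat.of A PUnit, fun _ => h, ⟨?_⟩⟩
  exact (prodPUnitEquiv (W : Type u)).trans (LinearEquiv.funUnique (Fin 1) A W).symm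

theorem memAdd_summand {S : Set (ModuleCat.{u} A)} {X W : ModuleCat.{u} A}
    (Z : Type u) [AddCommGroup Z] [Module A Z]
    (e : (↑X × Z) ≃ₗ[A] (W : Type u)) (h : memAdd A S W) : memAdd A S X := by
  obtain ⟨n, M, Y, hM, ⟨f⟩⟩ := h
  refine ⟨n, M, ModuleCat.of A (Z × Y), hM, ⟨?_⟩⟩
  exact ((LinearEquiv.prodAssoc A X Z Y).symm.trans
    (e.prodCongr (LinearEquiv.refl A Y))).trans f

theorem memAdd_pi {S : Set (ModuleCat.{u} A)} {m : ℕ} (Z : Fin m → ModuleCat.{u} A)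
    (h : ∀ i, memAdd A S (Z i)) : memAdd A S (ModuleCat.of A (∀ i, (Z i : Type u))) := by
  choose k M Y hM he using h
  let eq : Fin (Fintype.card (Σ i : Fin m, Fin (k i))) ≃ (Σ i : Fin m, Fin (k i)) :=
    (Fintype.equivFin _).symm
  refine ⟨Fintype.card (Σ i : Fin m, Fin (k i)), fun q => M (eq q).1 (eq q).2,
    ModuleCat.of A (∀ i : Fin m, (Y i : Type u)), fun q => hM _ _, ⟨?_⟩⟩
  have e1 : ((∀ i : Fin m, (Z i : Type u)) × (∀ i : Fin m, (Y i : Type u))) ≃ₗ[A]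
      (∀ i : Fin m, (↥(Z i) × ↥(Y i))) := (piProd _ _).symm
  have e2 : (∀ i : Fin m, (↥(Z i) × ↥(Y i))) ≃ₗ[A]
      (∀ i : Fin m, ∀ j : Fin (k i), (M i j : Type u)) :=
    LinearEquiv.piCongrRight (fun i => Classical.choice (he i))
  have e3 : (∀ p : (Σ i : Fin m, Fin (k i)), (M p.1 p.2 : Type u)) ≃ₗ[A]
      (∀ i : Fin m, ∀ j : Fin (k i), (M i j : Type u)) :=
    LinearEquiv.piCurry A (fun (i : Fin m) (j : Fin (k i)) => ↥(M i j))
  have e4 : (∀ q : Fin (Fintype.card (Σ i : Fin m, Fin (k i))),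
      (M (eq q).1 (eq q).2 : Type u)) ≃ₗ[A]
      (∀ p : (Σ i : Fin m, Fin (k i)), (M p.1 p.2 : Type u)) :=
    LinearEquiv.piCongrLeft A (fun p : (Σ i : Fin m, Fin (k i)) => (M p.1 p.2 : Type u)) eq
  exact ((e1.trans e2).trans e3.symm).trans e4.symm

theorem memAdd_trans {S S' : Set (ModuleCat.{u} A)} {X : ModuleCat.{u} A}
    (h : memAdd A S X) (h2 : ∀ W ∈ S, memAdd A S' W) : memAdd A S' X := by
  obtain ⟨n, M, Y, hM, ⟨f⟩⟩ := h
  exact memAdd_summand (Y : Type u) f (memAdd_pi M (fun i => h2 _ (hM i)))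

theorem memAdd_finite {S : Set (ModuleCat.{u} A)} {X : ModuleCat.{u} A}
    (hS : ∀ W ∈ S, Module.Finite A W) (h : memAdd A S X) : Module.Finite A X := by
  obtain ⟨n, M, Y, hM, ⟨f⟩⟩ := h
  have : ∀ i, Module.Finite A (M i) := fun i => hS _ (hM i)
  have : Module.Finite A (∀ i, (M i : Type u)) := Module.Finite.pi
  exact Module.Finite.of_surjective ((LinearMap.fst A X Y).comp f.symm.toLinearMap)
    (Prod.fst_surjective.comp f.symm.surjective)

theorem addOf_self (T : ModuleCat.{u} A) : T ∈ addOf A T := memAdd_self rfl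

theorem addOf_of_equiv {T X X' : ModuleCat.{u} A} (e : (X : Type u) ≃ₗ[A] (X' : Type u))
    (h : X ∈ addOf A T) : X' ∈ addOf A T := memAdd_of_equiv e h

theorem addOf_finite {T X : ModuleCat.{u} A} (hT : Module.Finite A T) (h : X ∈ addOf A T) :
    Module.Finite A X :=
  memAdd_finite (fun W hW => by rwa [Set.mem_singleton_iff.mp hW]) h

theorem addOf_subset_of_mem {T' C : ModuleCat.{u} A} (h : C ∈ addOf A T') :
    addOf A C ⊆ addOf A T' := fun X hX =>
  memAdd_trans hX (fun W hW => by rwa [Set.mem_singleton_iff.mp hW])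

end Aux

namespace Aux
open Paper
variable {A : Type u} [Ring A]

/-- envelope data: an essential embedding into an injective module -/
def IsEnv {M I : Type u} [AddCommGroup M] [Module A M] [AddCommGroup I] [Module A I]
    (ι : M →ₗ[A] I) : Prop :=
  Module.Injective A I ∧ Function.Injective ι ∧
    ∀ P : Submodule A I, P ⊓ LinearMap.range ι = ⊥ → P = ⊥

section Env
variable {M I : Type u} [AddCommGroup M] [Module A M] [AddCommGroup I] [Module A I]

theorem ess_element {ι : M →ₗ[A] I}
    (hess : ∀ P : Submodule A I, P ⊓ LinearMap.range ι = ⊥ → P = ⊥)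
    {x : I} (hx : x ≠ 0) : ∃ a : A, a • x ∈ LinearMap.range ι ∧ a • x ≠ 0 := by
  by_contra h
  push_neg at h
  have hb : Submodule.span A {x} ⊓ LinearMap.range ι = ⊥ := by
    rw [eq_bot_iff]
    rintro y ⟨hy1, hy2⟩
    obtain ⟨a, rfl⟩ := Submodule.mem_span_singleton.mp hy1
    simpa using h a hy2
  exact hx (Submodule.span_singleton_eq_bot.mp (hess _ hb))

theorem ess_of_element {ι : M →ₗ[A] I}
    (h : ∀ x : I, x ≠ 0 → ∃ a : A, a • x ∈ LinearMap.range ι ∧ a • x ≠ 0) :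
    ∀ P : Submodule A I, P ⊓ LinearMap.range ι = ⊥ → P = ⊥ := by
  intro P hP
  by_contra hPne
  obtain ⟨x, hxP, hx0⟩ := (Submodule.ne_bot_iff P).mp hPne
  obtain ⟨a, har, hane⟩ := h x hx0
  have : a • x ∈ P ⊓ LinearMap.range ι := ⟨P.smul_mem a hxP, har⟩
  rw [hP] at this
  exact hane this

end Env

section Prod
variable {M1 I1 M2 I2 : Type u} [AddCommGroup M1] [Module A M1] [AddCommGroup I1] [Module A I1]
  [AddCommGroup M2] [Module A M2] [AddCommGroup I2] [Module A I2]

theorem range_prodMap (ι1 : M1 →ₗ[A] I1) (ι2 : M2 →ₗ[A] I2) :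
    LinearMap.range (ι1.prodMap ι2) = (LinearMap.range ι1).prod (LinearMap.range ι2) := by
  ext ⟨y1, y2⟩
  constructor
  · rintro ⟨⟨x1, x2⟩, h⟩
    obtain ⟨h1, h2⟩ := Prod.mk.injEq .. ▸ h
    exact ⟨⟨x1, h1⟩, ⟨x2, h2⟩⟩
  · rintro ⟨⟨x1, h1⟩, ⟨x2, h2⟩⟩
    exact ⟨(x1, x2), by simp [h1, h2]⟩

theorem injective_prodMap {ι1 : M1 →ₗ[A] I1} {ι2 : M2 →ₗ[A] I2}
    (h1 : Function.Injective ι1) (h2 : Function.Injective ι2) :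
    Function.Injective (ι1.prodMap ι2) := by
  rintro ⟨a1, a2⟩ ⟨b1, b2⟩ h
  obtain ⟨e1, e2⟩ := Prod.mk.injEq .. ▸ h
  exact Prod.ext (h1 e1) (h2 e2)

theorem inj_prod (h1 : Module.Injective A I1) (h2 : Module.Injective A I2) :
    Module.Injective A (I1 × I2) := by
  constructor
  intro X Y _ _ _ _ f hf g
  obtain ⟨u1, hu1⟩ := h1.out f hf ((LinearMap.fst A I1 I2).comp g)
  obtain ⟨u2, hu2⟩ := h2.out f hf ((LinearMap.snd A I1 I2).comp g)
  exact ⟨u1.prod u2, fun x => Prod.ext (hu1 x) (hu2 x)⟩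

theorem ess_prod {ι1 : M1 →ₗ[A] I1} {ι2 : M2 →ₗ[A] I2}
    (h1 : ∀ P : Submodule A I1, P ⊓ LinearMap.range ι1 = ⊥ → P = ⊥)
    (h2 : ∀ P : Submodule A I2, P ⊓ LinearMap.range ι2 = ⊥ → P = ⊥) :
    ∀ P : Submodule A (I1 × I2), P ⊓ LinearMap.range (ι1.prodMap ι2) = ⊥ → P = ⊥ := by
  apply ess_of_element
  rintro ⟨x1, x2⟩ hx
  rw [range_prodMap]
  by_cases hx1 : x1 = 0
  · have hx2 : x2 ≠ 0 := fun h => hx (by simp [hx1, h, Prod.ext_iff])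
    obtain ⟨a, har, hane⟩ := ess_element h2 hx2
    refine ⟨a, ⟨by simp [hx1], har⟩, ?_⟩
    simp only [Prod.smul_mk, ne_eq, Prod.mk_eq_zero, not_and]
    exact fun _ => hane
  · obtain ⟨a, har, hane⟩ := ess_element h1 hx1
    by_cases hax2 : a • x2 = 0
    · exact ⟨a, ⟨har, by simp [hax2]⟩, by
        simp only [Prod.smul_mk, ne_eq, Prod.mk_eq_zero, not_and]
        exact fun h => absurd h hane⟩
    · obtain ⟨b, hbr, hbne⟩ := ess_element h2 hax2
      refine ⟨b * a, ⟨?_, by rwa [mul_smul]⟩, ?_⟩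
      · rw [mul_smul]
        exact (LinearMap.range ι1).smul_mem b har
      · simp only [Prod.smul_mk, ne_eq, Prod.mk_eq_zero, not_and, mul_smul]
        intro _; exact hbne

theorem isEnv_prodMap {ι1 : M1 →ₗ[A] I1} {ι2 : M2 →ₗ[A] I2}
    (h1 : IsEnv ι1) (h2 : IsEnv ι2) : IsEnv (ι1.prodMap ι2) :=
  ⟨inj_prod h1.1 h2.1, injective_prodMap h1.2.1 h2.2.1, ess_prod h1.2.2 h2.2.2⟩

/-- quotient of a product by a product -/
theorem quot_prod (ι1 : M1 →ₗ[A] I1) (ι2 : M2 →ₗ[A] I2) :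
    Nonempty (((I1 × I2) ⧸ LinearMap.range (ι1.prodMap ι2)) ≃ₗ[A]
      ((I1 ⧸ LinearMap.range ι1) × (I2 ⧸ LinearMap.range ι2))) := by
  let Φ := (LinearMap.range ι1).mkQ.prodMap (LinearMap.range ι2).mkQ
  have hsurj : Function.Surjective Φ :=
    Function.Surjective.prodMap (Submodule.mkQ_surjective _) (Submodule.mkQ_surjective _)
  have hker : LinearMap.range (ι1.prodMap ι2) = LinearMap.ker Φ := by
    rw [LinearMap.ker_prodMap, Submodule.ker_mkQ, Submodule.ker_mkQ, range_prodMap]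
  exact ⟨(Submodule.quotEquivOfEq _ _ hker).trans (LinearMap.quotKerEquivOfSurjective Φ hsurj)⟩

end Prod

section Transport
variable {M M' I I' : Type u} [AddCommGroup M] [Module A M] [AddCommGroup I] [Module A I]
  [AddCommGroup M'] [Module A M'] [AddCommGroup I'] [Module A I']

theorem range_comp_equiv (f : M →ₗ[A] I) (e : M' ≃ₗ[A] M) :
    LinearMap.range (f.comp e.toLinearMap) = LinearMap.range f := by
  ext y
  constructor
  · rintro ⟨x, rfl⟩; exact ⟨e x, rfl⟩
  · rintro ⟨x, rfl⟩; exact ⟨e.symm x, by simp⟩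

theorem isEnv_comp_equiv {ι : M →ₗ[A] I} (h : IsEnv ι) (e : M' ≃ₗ[A] M) :
    IsEnv (ι.comp e.toLinearMap) := by
  refine ⟨h.1, ?_, ?_⟩
  · exact h.2.1.comp e.injective
  · rw [range_comp_equiv]; exact h.2.2

theorem inj_of_equiv (e : I ≃ₗ[A] I') (h : Module.Injective A I) : Module.Injective A I' := by
  constructor
  intro X Y _ _ _ _ f hf g
  obtain ⟨u, hu⟩ := h.out f hf ((e.symm : I' →ₗ[A] I).comp g)
  refine ⟨(e : I →ₗ[A] I').comp u, fun x => ?_⟩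
  have := hu x
  simp only [LinearMap.coe_comp, Function.comp_apply, LinearEquiv.coe_coe] at this ⊢
  rw [this, e.apply_symm_apply]

theorem exists_retraction {P : Type u} [AddCommGroup P] [Module A P]
    (hP : Module.Injective A P) (f : P →ₗ[A] I) (hf : Function.Injective f) :
    ∃ r : I →ₗ[A] P, ∀ x, r (f x) = x := by
  obtain ⟨r, hr⟩ := hP.out f hf LinearMap.id
  exact ⟨r, hr⟩

end Transport
end Aux

namespace Aux
open Paper
variable {A : Type u} [Ring A]

section Unique
variable {M I M' I' : Type u} [AddCommGroup M] [Module A M] [AddCommGroup I] [Module A I]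
  [AddCommGroup M'] [Module A M'] [AddCommGroup I'] [Module A I']

/-- uniqueness of the cosyzygy: two essential injective embeddings of isomorphic modules
have isomorphic quotients -/
theorem env_quot_unique (ι : M →ₗ[A] I) (ι' : M' →ₗ[A] I') (h : IsEnv ι) (h' : IsEnv ι')
    (e : M ≃ₗ[A] M') :
    Nonempty ((I ⧸ LinearMap.range ι) ≃ₗ[A] (I' ⧸ LinearMap.range ι')) := by
  obtain ⟨φ, hφ⟩ := h'.1.out ι h.2.1 (ι'.comp (e : M →ₗ[A] M'))
  have hφι : ∀ x, φ (ι x) = ι' (e x) := fun x => by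
    simpa using hφ x
  -- φ is injective
  have hφinj : Function.Injective φ := by
    rw [← LinearMap.ker_eq_bot]
    apply h.2.2
    rw [eq_bot_iff]
    rintro y ⟨hy1, x, rfl⟩
    have h0 : ι' (e x) = 0 := by rw [← hφι]; exact hy1
    have hex : e x = 0 := h'.2.1 (by rw [h0, map_zero])
    have : x = 0 := by
      have := congrArg e.symm hex
      simpa using this
    simp [this]
  -- φ is surjective
  have hIeq : Module.Injective A (LinearMap.range φ) :=
    inj_of_equiv (LinearEquiv.ofInjective φ hφinj) h.1
  obtain ⟨r, hr0⟩ := exists_retraction hIeq (LinearMap.range φ).subtype Subtype.coe_injective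
  have hr : ∀ x : LinearMap.range φ, r (x : I') = x := fun x => hr0 x
  have hφsurj : Function.Surjective φ := by
    intro y
    have hkerr : LinearMap.ker r = ⊥ := by
      apply h'.2.2
      rw [eq_bot_iff]
      rintro z ⟨hz1, x', rfl⟩
      have hmem : ι' x' ∈ LinearMap.range φ := ⟨ι (e.symm x'), by rw [hφι, e.apply_symm_apply]⟩
      have hz0 : r (ι' x') = 0 := hz1
      have heq : r (ι' x') = ⟨ι' x', hmem⟩ := hr ⟨ι' x', hmem⟩
      have : (⟨ι' x', hmem⟩ : LinearMap.range φ) = 0 := heq ▸ hz0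
      have : ι' x' = 0 := congrArg Subtype.val this
      simp [this]
    have hy : y - ((r y : LinearMap.range φ) : I') ∈ LinearMap.ker r := by
      rw [LinearMap.mem_ker, map_sub, hr (r y), sub_self]
    rw [hkerr, Submodule.mem_bot, sub_eq_zero] at hy
    obtain ⟨x, hx⟩ := (r y).2
    exact ⟨x, by rw [hx]; exact hy.symm⟩
  -- descend to quotients
  have hmap : Submodule.map (LinearEquiv.ofBijective φ ⟨hφinj, hφsurj⟩ : I →ₗ[A] I') (LinearMap.range ι)
      = LinearMap.range ι' := by
    ext y
    constructor
    · rintro ⟨z, ⟨x, rfl⟩, rfl⟩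
      exact ⟨e x, (hφι x).symm⟩
    · rintro ⟨x', rfl⟩
      exact ⟨ι (e.symm x'), ⟨e.symm x', rfl⟩, by
        show φ _ = _
        rw [hφι, e.apply_symm_apply]⟩
  exact ⟨Submodule.Quotient.equiv _ _ (LinearEquiv.ofBijective φ ⟨hφinj, hφsurj⟩) hmap⟩

end Unique

section Junk
variable {W IW J : Type u} [AddCommGroup W] [Module A W] [AddCommGroup IW] [Module A IW]
  [AddCommGroup J] [Module A J]

/-- quotient by an arbitrary injective embedding = cosyzygy plus a complement -/
theorem junk_decomp (ιW : W →ₗ[A] IW) (hW : IsEnv ιW) (emb : W →ₗ[A] J)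
    (hemb : Function.Injective emb) (hJ : Module.Injective A J) :
    ∃ (C : ModuleCat.{u} A), Nonempty ((J ⧸ LinearMap.range emb) ≃ₗ[A]
      ((IW ⧸ LinearMap.range ιW) × C)) := by
  obtain ⟨h, hh⟩ := hJ.out ιW hW.2.1 emb
  have hhinj : Function.Injective h := by
    rw [← LinearMap.ker_eq_bot]
    apply hW.2.2
    rw [eq_bot_iff]
    rintro y ⟨hy1, x, rfl⟩
    have h0 : emb x = 0 := by rw [← hh]; exact hy1
    have hx : x = 0 := hemb (by rw [h0, map_zero])
    rw [hx, map_zero]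
    exact Submodule.zero_mem ⊥
  obtain ⟨r, hr⟩ := exists_retraction hW.1 h hhinj
  -- the decomposition map
  refine ⟨ModuleCat.of A (LinearMap.ker r), ?_⟩
  have hcod : ∀ j : J, r (j - h (r j)) = 0 := fun j => by
    rw [map_sub, hr (r j), sub_self]
  let Φ : J →ₗ[A] ((IW ⧸ LinearMap.range ιW) × LinearMap.ker r) :=
    ((LinearMap.range ιW).mkQ.comp r).prod
      ((LinearMap.id - h.comp r).codRestrict (LinearMap.ker r) (fun j => by
        simpa using hcod j))
  have hsurj : Function.Surjective Φ := by
    rintro ⟨q, z⟩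
    obtain ⟨i, rfl⟩ := Submodule.mkQ_surjective _ q
    refine ⟨h i + z.1, ?_⟩
    have hrz : r z.1 = 0 := z.2
    have h1 : r (h i + z.1) = i := by rw [map_add, hr, hrz, add_zero]
    refine Prod.ext ?_ ?_
    · show Submodule.Quotient.mk (r (h i + z.1)) = Submodule.Quotient.mk i
      rw [h1]
    · apply Subtype.ext
      show (h i + z.1) - h (r (h i + z.1)) = z.1
      rw [h1]; abel
  have hker : LinearMap.ker Φ = LinearMap.range emb := by
    ext j
    constructor
    · intro hj
      have h1 : Submodule.Quotient.mk (p := LinearMap.range ιW) (r j) = 0 :=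
        congrArg Prod.fst hj
      have h2 : j - h (r j) = 0 := congrArg Subtype.val (congrArg Prod.snd hj)
      obtain ⟨w, hw⟩ := (Submodule.Quotient.mk_eq_zero _).mp h1
      refine ⟨w, ?_⟩
      rw [← hh, hw]
      exact (sub_eq_zero.mp h2).symm
    · rintro ⟨w, rfl⟩
      have h1 : r (emb w) = ιW w := by rw [← hh, hr]
      refine Prod.ext ?_ (Subtype.ext ?_)
      · show Submodule.Quotient.mk (r (emb w)) = (0 : _ ⧸ _)
        rw [h1, Submodule.Quotient.mk_eq_zero]
        exact ⟨w, rfl⟩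
      · show emb w - h (r (emb w)) = 0
        rw [h1, hh, sub_self]
  exact ⟨(Submodule.quotEquivOfEq _ _ hker.symm).trans
    (LinearMap.quotKerEquivOfSurjective Φ hsurj)⟩

end Junk
end Aux

namespace Aux
open Paper
variable {A : Type u} [Ring A]

theorem inj_punit : Module.Injective A PUnit.{u+1} := by
  constructor
  intro X Y _ _ _ _ f hf g
  exact ⟨0, fun x => Subsingleton.elim _ _⟩

theorem subsingleton_quot_of_subsingleton {M : Type u} [AddCommGroup M] [Module A M]
    [Subsingleton M] (P : Submodule A M) : Subsingleton (M ⧸ P) :=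
  Function.Surjective.subsingleton (Submodule.mkQ_surjective P)

set_option maxHeartbeats 1000000 in
/-- envelopes of finite families: envelope of the product with product quotient -/
theorem piEnv : ∀ (m : ℕ) (B I C : Fin m → ModuleCat.{u} A)
    (ι : ∀ i, (B i : Type u) →ₗ[A] (I i : Type u)),
    (∀ i, IsEnv (ι i)) →
    (∀ i, Nonempty (((I i : Type u) ⧸ LinearMap.range (ι i)) ≃ₗ[A] (C i : Type u))) →
    ∃ (J : ModuleCat.{u} A) (κ : (∀ i, (B i : Type u)) →ₗ[A] (J : Type u)),
      IsEnv κ ∧ Nonempty (((J : Type u) ⧸ LinearMap.range κ) ≃ₗ[A] (∀ i, (C i : Type u))) := by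
  intro m
  induction m with
  | zero =>
    intro B I C ι hι hq
    refine ⟨ModuleCat.of A PUnit, 0, ⟨inj_punit, ?_, ?_⟩, ⟨?_⟩⟩
    · intro a b _
      exact Subsingleton.elim a b
    · intro P hP
      rw [eq_bot_iff]
      intro x _
      have : x = 0 := Subsingleton.elim x 0
      rw [this]; exact Submodule.zero_mem ⊥
    · have : Subsingleton (PUnit.{u+1} ⧸ LinearMap.range
        (0 : (∀ i : Fin 0, (B i : Type u)) →ₗ[A] PUnit.{u+1})) :=
        subsingleton_quot_of_subsingleton _
      exact eqvSubsingleton _ _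
  | succ m ih =>
    intro B I C ι hι hq
    obtain ⟨J', κ', hκ', ⟨q'⟩⟩ := ih (fun i => B i.succ) (fun i => I i.succ) (fun i => C i.succ)
      (fun i => ι i.succ) (fun i => hι i.succ) (fun i => hq i.succ)
    let eB := piSucc (A := A) (fun i => (B i : Type u))
    let κ0 : ((B 0 : Type u) × (∀ i : Fin m, (B i.succ : Type u))) →ₗ[A]
        ((I 0 : Type u) × (J' : Type u)) := (ι 0).prodMap κ'
    let κ : (∀ i, (B i : Type u)) →ₗ[A] ((I 0 : Type u) × (J' : Type u)) :=
      κ0.comp eB.toLinearMap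
    refine ⟨ModuleCat.of A ((I 0 : Type u) × (J' : Type u)), κ, ?_, ?_⟩
    · exact isEnv_comp_equiv (isEnv_prodMap (hι 0) hκ') eB
    · have hrange : LinearMap.range κ = LinearMap.range κ0 :=
        range_comp_equiv κ0 eB
      obtain ⟨qp⟩ := quot_prod (ι 0) κ'
      obtain ⟨c0⟩ := hq 0
      have e1 : (((I 0 : Type u) × (J' : Type u)) ⧸ LinearMap.range κ) ≃ₗ[A]
          (((I 0 : Type u) × (J' : Type u)) ⧸ LinearMap.range κ0) :=
        Submodule.quotEquivOfEq _ _ hrange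
      have e2 : (((I 0 : Type u) ⧸ LinearMap.range (ι 0)) × ((J' : Type u) ⧸
          LinearMap.range κ')) ≃ₗ[A] ((C 0 : Type u) × (∀ i : Fin m, (C i.succ : Type u))) :=
        c0.prodCongr q'
      exact ⟨((e1.trans qp).trans e2).trans
        (piSucc (A := A) (fun i => (C i : Type u))).symm⟩
end Aux

namespace Aux
open Paper
variable {A : Type u} [Ring A]
variable {Cos : ModuleCat.{u} A → ModuleCat.{u} A}

theorem hCos_env (hCos : IsCosyzygyOp A Cos) {M : ModuleCat.{u} A} (hM : Module.Finite A M) :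
    ∃ (I : ModuleCat.{u} A) (ι : (M : Type u) →ₗ[A] (I : Type u)),
      Module.Finite A I ∧ IsEnv ι ∧
      Nonempty ((Cos M : Type u) ≃ₗ[A] ((I : Type u) ⧸ LinearMap.range ι)) := by
  obtain ⟨I, ι, hfin, hinj, hinjι, hess, hc⟩ := hCos M hM
  exact ⟨I, ι, hfin, ⟨hinj, hinjι, hess⟩, hc⟩

theorem cos_finite (hCos : IsCosyzygyOp A Cos) {M : ModuleCat.{u} A}
    (hM : Module.Finite A M) : Module.Finite A (Cos M) := by
  obtain ⟨I, ι, hfin, _, ⟨c⟩⟩ := hCos_env hCos hM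
  have : Module.Finite A ((I : Type u) ⧸ LinearMap.range ι) :=
    Module.Finite.of_surjective _ (Submodule.mkQ_surjective (LinearMap.range ι))
  exact Module.Finite.equiv c.symm

/-- `Ω⁻¹` of a direct summand of `Tⁿ` is a direct summand of `(Ω⁻¹T)ⁿ` -/
theorem cos_addOf (hCos : IsCosyzygyOp A Cos) {T X : ModuleCat.{u} A}
    (hT : Module.Finite A T) (hX : X ∈ addOf A T) : Cos X ∈ addOf A (Cos T) := by
  obtain ⟨m, M, Y, hM, ⟨e⟩⟩ := hX
  have hMeq : M = fun _ => T := funext fun i => hM i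
  subst hMeq
  have hXfin : Module.Finite A X := addOf_finite hT ⟨m, _, Y, fun _ => rfl, ⟨e⟩⟩
  have hPifin : Module.Finite A (∀ _ : Fin m, (T : Type u)) := Module.Finite.pi
  have hYfin : Module.Finite A Y :=
    Module.Finite.of_surjective ((LinearMap.snd A X Y).comp e.symm.toLinearMap)
      (Prod.snd_surjective.comp e.symm.surjective)
  obtain ⟨IX, ιX, _, hEX, ⟨cX⟩⟩ := hCos_env hCos hXfin
  obtain ⟨IY, ιY, _, hEY, ⟨cY⟩⟩ := hCos_env hCos hYfin
  obtain ⟨IT, ιT, _, hET, ⟨cT⟩⟩ := hCos_env hCos hT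
  -- envelope of T^m
  obtain ⟨J, κ, hEJ, ⟨qJ⟩⟩ := piEnv m (fun _ => T) (fun _ => IT) (fun _ => Cos T)
    (fun _ => ιT) (fun _ => hET) (fun _ => ⟨cT.symm⟩)
  -- uniqueness: quotient of envelope of X × Y ≃ quotient of envelope of T^m
  obtain ⟨uq⟩ := env_quot_unique (ιX.prodMap ιY) κ (isEnv_prodMap hEX hEY) hEJ e
  obtain ⟨qp⟩ := quot_prod ιX ιY
  refine ⟨m, fun _ => Cos T, Cos Y, fun _ => rfl, ⟨?_⟩⟩
  exact (((cX.prodCongr cY).trans qp.symm).trans uq).trans qJ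

/-- all members of a chain of `addOf`s are finitely generated -/
theorem chain_finite : ∀ (n : ℕ) (N : ℕ → ModuleCat.{u} A),
    (∀ i, Module.Finite A (N i)) → ∀ X : ModuleCat.{u} A,
    X ∈ bulletChain A (fun i => addOf A (N i)) n → Module.Finite A X := by
  intro n
  induction n with
  | zero =>
    intro N hN X hX
    exact memAdd_finite (fun W hW => addOf_finite (hN 0) hW) hX
  | succ n ih =>
    intro N hN X hX
    exact memAdd_finite (fun W hW => hW.1) hX

theorem chain_iso_closed {S : ℕ → Set (ModuleCat.{u} A)} {n : ℕ} {X X' : ModuleCat.{u} A}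
    (e : (X : Type u) ≃ₗ[A] (X' : Type u))
    (hX : X ∈ bulletChain A S n) : X' ∈ bulletChain A S n := by
  cases n with
  | zero => exact memAdd_of_equiv e hX
  | succ n => exact memAdd_of_equiv e hX

end Aux

namespace Aux
open Paper
variable {A : Type u} [Ring A]
variable {Cos : ModuleCat.{u} A → ModuleCat.{u} A}

set_option maxHeartbeats 1000000 in
/-- horseshoe: the cosyzygy of the middle of a s.e.s. is a summand of an extension of
the cosyzygies of the ends -/
theorem cos_of_extension (hCos : IsCosyzygyOp A Cos) {W T1 T2 : ModuleCat.{u} A}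
    (hWfin : Module.Finite A W) (hT1 : Module.Finite A T1) (hT2 : Module.Finite A T2)
    (f : (T1 : Type u) →ₗ[A] (W : Type u)) (g : (W : Type u) →ₗ[A] (T2 : Type u))
    (hses : IsSES A f g) :
    ∃ (Z Q1 Q2 : ModuleCat.{u} A) (f' : (Q1 : Type u) →ₗ[A] (Z : Type u))
      (g' : (Z : Type u) →ₗ[A] (Q2 : Type u)),
      Module.Finite A Z ∧ IsSES A f' g' ∧
      Nonempty ((Cos T1 : Type u) ≃ₗ[A] (Q1 : Type u)) ∧
      Nonempty ((Cos T2 : Type u) ≃ₗ[A] (Q2 : Type u)) ∧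
      ∃ C : ModuleCat.{u} A, Nonempty ((↥(Cos W) × ↥C) ≃ₗ[A] (Z : Type u)) := by
  obtain ⟨hfinj, hgsurj, hrange⟩ := hses
  obtain ⟨I1, ι1, hfin1, hE1, ⟨c1⟩⟩ := hCos_env hCos hT1
  obtain ⟨I2, ι2, hfin2, hE2, ⟨c2⟩⟩ := hCos_env hCos hT2
  obtain ⟨IW, ιW, hfinW, hEW, ⟨cW⟩⟩ := hCos_env hCos hWfin
  obtain ⟨ext, hext⟩ := hE1.1.out f hfinj ι1
  set emb : (W : Type u) →ₗ[A] (↥I1 × ↥I2) := ext.prod (ι2.comp g) with hemb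
  have hgf : ∀ t, g (f t) = 0 := fun t =>
    LinearMap.mem_ker.mp (hrange ▸ LinearMap.mem_range_self f t)
  have hembf : ∀ t, emb (f t) = (ι1 t, 0) := fun t => by
    simp only [hemb, LinearMap.prod_apply, Function.prod, LinearMap.comp_apply, hext, hgf, map_zero]
  have hembinj : Function.Injective emb := by
    rw [← LinearMap.ker_eq_bot]
    rw [eq_bot_iff]
    intro x hx
    have hx1 : ext x = 0 := congrArg Prod.fst (LinearMap.mem_ker.mp hx)
    have hx2 : ι2 (g x) = 0 := congrArg Prod.snd (LinearMap.mem_ker.mp hx)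
    have hgx : g x = 0 := hE2.2.1 (by rw [hx2, map_zero])
    have : x ∈ LinearMap.range f := hrange.symm ▸ LinearMap.mem_ker.mpr hgx
    obtain ⟨t, rfl⟩ := this
    have : ι1 t = 0 := by rw [← hext]; exact hx1
    have : t = 0 := hE1.2.1 (by rw [this, map_zero])
    simp [this]
  set D := LinearMap.range emb with hD
  have hf'cond : LinearMap.range ι1 ≤ LinearMap.ker (D.mkQ.comp (LinearMap.inl A ↥I1 ↥I2)) := by
    rintro y ⟨t, rfl⟩
    show D.mkQ (ι1 t, 0) = 0
    rw [Submodule.mkQ_apply, Submodule.Quotient.mk_eq_zero]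
    exact ⟨f t, hembf t⟩
  have hg'cond : D ≤ LinearMap.ker ((LinearMap.range ι2).mkQ.comp (LinearMap.snd A ↥I1 ↥I2)) := by
    rintro y ⟨w, rfl⟩
    show (LinearMap.range ι2).mkQ (ι2 (g w)) = 0
    rw [Submodule.mkQ_apply, Submodule.Quotient.mk_eq_zero]
    exact ⟨g w, rfl⟩
  let f' : ((I1 : Type u) ⧸ LinearMap.range ι1) →ₗ[A] ((↥I1 × ↥I2) ⧸ D) :=
    Submodule.liftQ (LinearMap.range ι1) (D.mkQ.comp (LinearMap.inl A ↥I1 ↥I2)) hf'cond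
  let g' : ((↥I1 × ↥I2) ⧸ D) →ₗ[A] ((I2 : Type u) ⧸ LinearMap.range ι2) :=
    Submodule.liftQ D ((LinearMap.range ι2).mkQ.comp (LinearMap.snd A ↥I1 ↥I2)) hg'cond
  refine ⟨ModuleCat.of A ((↥I1 × ↥I2) ⧸ D),
    ModuleCat.of A ((I1 : Type u) ⧸ LinearMap.range ι1),
    ModuleCat.of A ((I2 : Type u) ⧸ LinearMap.range ι2), f', g', ?_, ?_, ⟨c1⟩, ⟨c2⟩, ?_⟩
  · -- Z finite
    have : Module.Finite A (↥I1 × ↥I2) := Module.Finite.prod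
    exact Module.Finite.of_surjective D.mkQ (Submodule.mkQ_surjective D)
  · -- SES
    refine ⟨?_, ?_, ?_⟩
    · -- injectivity of f'
      rw [← LinearMap.ker_eq_bot, eq_bot_iff]
      intro q hq
      obtain ⟨i1, rfl⟩ := Submodule.mkQ_surjective _ q
      have h0 : D.mkQ (i1, 0) = 0 := hq
      rw [Submodule.mkQ_apply, Submodule.Quotient.mk_eq_zero] at h0
      obtain ⟨w, hw⟩ := h0
      have hw2 : ι2 (g w) = 0 := congrArg Prod.snd hw
      have hgw : g w = 0 := hE2.2.1 (by rw [hw2, map_zero])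
      have : w ∈ LinearMap.range f := hrange.symm ▸ LinearMap.mem_ker.mpr hgw
      obtain ⟨t, rfl⟩ := this
      have hw1 : ext (f t) = i1 := congrArg Prod.fst hw
      rw [Submodule.mem_bot, Submodule.mkQ_apply, Submodule.Quotient.mk_eq_zero]
      exact ⟨t, by rw [← hw1, hext]⟩
    · -- surjectivity of g'
      intro q
      obtain ⟨i2, rfl⟩ := Submodule.mkQ_surjective _ q
      refine ⟨D.mkQ (0, i2), ?_⟩
      show (LinearMap.range ι2).mkQ i2 = Submodule.Quotient.mk i2
      rfl
    · -- exactness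
      apply le_antisymm
      · rintro z ⟨q1, rfl⟩
        obtain ⟨i1, rfl⟩ := Submodule.mkQ_surjective _ q1
        show (LinearMap.range ι2).mkQ ((i1, (0 : (I2 : Type u))).2) = 0
        rw [Submodule.mkQ_apply, Submodule.Quotient.mk_eq_zero]
        exact ⟨0, map_zero ι2⟩
      · intro z hz
        obtain ⟨⟨i1, i2⟩, rfl⟩ := Submodule.mkQ_surjective _ z
        have h0 : (LinearMap.range ι2).mkQ i2 = 0 := hz
        rw [Submodule.mkQ_apply, Submodule.Quotient.mk_eq_zero] at h0
        obtain ⟨t2, rfl⟩ := h0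
        obtain ⟨w, rfl⟩ := hgsurj t2
        refine ⟨Submodule.Quotient.mk (i1 - ext w), ?_⟩
        show D.mkQ (i1 - ext w, 0) = D.mkQ (i1, ι2 (g w))
        rw [Submodule.mkQ_apply, Submodule.mkQ_apply, Submodule.Quotient.eq]
        refine ⟨-w, ?_⟩
        rw [map_neg]
        show -(ext w, ι2 (g w)) = (i1 - ext w, 0) - (i1, ι2 (g w))
        refine Prod.ext ?_ ?_
        · show -(ext w) = (i1 - ext w) - i1
          abel
        · show -(ι2 (g w)) = 0 - ι2 (g w)
          abel
  · -- junk decomposition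
    obtain ⟨C, ⟨jd⟩⟩ := junk_decomp ιW hEW emb hembinj (inj_prod hE1.1 hE2.1)
    exact ⟨C, ⟨(cW.prodCongr (LinearEquiv.refl A (C : Type u))).trans jd.symm⟩⟩

end Aux

namespace Aux
open Paper
variable {A : Type u} [Ring A]
variable {Cos : ModuleCat.{u} A → ModuleCat.{u} A}

set_option maxHeartbeats 1600000 in
/-- cosyzygy of a chain membership -/
theorem lemC (hCos : IsCosyzygyOp A Cos) : ∀ (n : ℕ) (N : ℕ → ModuleCat.{u} A),
    (∀ i, Module.Finite A (N i)) → ∀ K : ModuleCat.{u} A,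
    K ∈ bulletChain A (fun i => addOf A (N i)) n →
    Cos K ∈ bulletChain A (fun i => addOf A (Cos (N i))) n := by
  intro n
  induction n with
  | zero =>
    intro N hN K hK
    have hK' : K ∈ addOf A (N 0) := memAdd_trans hK (fun W hW => hW)
    exact memAdd_self (cos_addOf hCos (hN 0) hK')
  | succ n ih =>
    intro N hN K hK
    obtain ⟨m, W, Y, hW, ⟨e⟩⟩ := hK
    have h1 : ∀ i, Module.Finite A (W i) := fun i => (hW i).1
    have h2 := fun i => (hW i).2
    choose T1 T2 f g hT1 hT2 hses using h2
    -- step 1: each Cos (W i) is in the new extension class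
    have step1 : ∀ i, memAdd A {V : ModuleCat.{u} A | Module.Finite A V ∧
        ∃ (U1 U2 : ModuleCat.{u} A) (u : (U1 : Type u) →ₗ[A] (V : Type u))
          (v : (V : Type u) →ₗ[A] (U2 : Type u)),
          U1 ∈ addOf A (Cos (N 0)) ∧
          U2 ∈ bulletChain A (fun j => addOf A (Cos (N (j+1)))) n ∧ IsSES A u v}
        (Cos (W i)) := by
      intro i
      have hT1fin : Module.Finite A (T1 i) := addOf_finite (hN 0) (hT1 i)
      have hT2fin : Module.Finite A (T2 i) := chain_finite n (fun j => N (j+1))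
        (fun j => hN (j+1)) (T2 i) (hT2 i)
      obtain ⟨Z, Q1, Q2, f', g', hZfin, hses', ⟨cq1⟩, ⟨cq2⟩, C, ⟨hsum⟩⟩ :=
        cos_of_extension hCos (h1 i) hT1fin hT2fin (f i) (g i) (hses i)
      have hQ1 : Q1 ∈ addOf A (Cos (N 0)) :=
        addOf_of_equiv cq1 (cos_addOf hCos (hN 0) (hT1 i))
      have hQ2 : Q2 ∈ bulletChain A (fun j => addOf A (Cos (N (j+1)))) n :=
        chain_iso_closed cq2 (ih (fun j => N (j+1)) (fun j => hN (j+1)) (T2 i) (hT2 i))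
      exact memAdd_summand (C : Type u) hsum
        (memAdd_self ⟨hZfin, Q1, Q2, f', g', hQ1, hQ2, hses'⟩)
    -- step 2: additivity of Cos across the decomposition
    have hKfin : Module.Finite A K := memAdd_finite (fun V hV => hV.1)
      ⟨m, W, Y, hW, ⟨e⟩⟩
    have hPifin : Module.Finite A (∀ i, (W i : Type u)) := Module.Finite.pi
    have hYfin : Module.Finite A Y :=
      Module.Finite.of_surjective ((LinearMap.snd A K Y).comp e.symm.toLinearMap)
        (Prod.snd_surjective.comp e.symm.surjective)
    obtain ⟨IK, ιK, _, hEK, ⟨cK⟩⟩ := hCos_env hCos hKfin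
    obtain ⟨IY, ιY, _, hEY, ⟨cY⟩⟩ := hCos_env hCos hYfin
    choose IW ιW hfinW hEW cWn using fun i => hCos_env hCos (h1 i)
    obtain ⟨J, κ, hEJ, ⟨qJ⟩⟩ := piEnv m W IW (fun i => Cos (W i)) ιW hEW
      (fun i => (cWn i).map LinearEquiv.symm)
    obtain ⟨uq⟩ := env_quot_unique (ιK.prodMap ιY) κ (isEnv_prodMap hEK hEY) hEJ e
    obtain ⟨qp⟩ := quot_prod ιK ιY
    have hsum : (↥(Cos K) × ↥(Cos Y)) ≃ₗ[A] (∀ i, (Cos (W i) : Type u)) :=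
      (((cK.prodCongr cY).trans qp.symm).trans uq).trans qJ
    exact memAdd_summand ((Cos Y : Type u)) hsum (memAdd_pi (fun i => Cos (W i)) step1)

end Aux

namespace Aux
open Paper
variable {A : Type u} [Ring A]
variable {Cos : ModuleCat.{u} A → ModuleCat.{u} A}

set_option maxHeartbeats 1600000 in
/-- pushout step: from `0 → K → M0 → X → 0` and a chain membership for `K`,
conclude the chain membership for `X`. -/
theorem lemL (hCos : IsCosyzygyOp A Cos) (n : ℕ) (N : ℕ → ModuleCat.{u} A)
    (hN : ∀ i, Module.Finite A (N i)) {K M0 X : ModuleCat.{u} A}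
    (hM0 : Module.Finite A M0)
    (f : (K : Type u) →ₗ[A] (M0 : Type u)) (g : (M0 : Type u) →ₗ[A] (X : Type u))
    (hf : Function.Injective f) (hg : Function.Surjective g)
    (hfg : LinearMap.range f = LinearMap.ker g)
    (hKc : K ∈ bulletChain A (fun i => addOf A (N i)) n) :
    X ∈ bullet A (addOf A M0) (bulletChain A (fun i => addOf A (Cos (N i))) n) := by
  have hKfin : Module.Finite A K := chain_finite n N hN K hKc
  obtain ⟨I, ι, hIfin, hE, ⟨cK⟩⟩ := hCos_env hCos hKfin
  -- the pushout W = (I × M0) / {(ι k, -f k)}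
  let δ : (K : Type u) →ₗ[A] (↥I × ↥M0) := ι.prod (-f)
  set D := LinearMap.range δ with hD
  let jI : (I : Type u) →ₗ[A] ((↥I × ↥M0) ⧸ D) := D.mkQ.comp (LinearMap.inl A ↥I ↥M0)
  let jM : (M0 : Type u) →ₗ[A] ((↥I × ↥M0) ⧸ D) := D.mkQ.comp (LinearMap.inr A ↥I ↥M0)
  have hδ : ∀ k, δ k = (ι k, -(f k)) := fun k => rfl
  have hjMinj : Function.Injective jM := by
    rw [← LinearMap.ker_eq_bot, eq_bot_iff]
    intro x hx
    have h0 : D.mkQ (0, x) = 0 := hx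
    rw [Submodule.mkQ_apply, Submodule.Quotient.mk_eq_zero] at h0
    obtain ⟨k, hk⟩ := h0
    have hk1 : ι k = 0 := congrArg Prod.fst hk
    have hk0 : k = 0 := hE.2.1 (by rw [hk1, map_zero])
    have hk2 : -(f k) = x := congrArg Prod.snd hk
    rw [hk0, map_zero, neg_zero] at hk2
    rw [Submodule.mem_bot, ← hk2]
  have hjIinj : Function.Injective jI := by
    rw [← LinearMap.ker_eq_bot, eq_bot_iff]
    intro x hx
    have h0 : D.mkQ (x, 0) = 0 := hx
    rw [Submodule.mkQ_apply, Submodule.Quotient.mk_eq_zero] at h0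
    obtain ⟨k, hk⟩ := h0
    have hk2 : -(f k) = 0 := congrArg Prod.snd hk
    have hk0 : k = 0 := hf (by rw [map_zero, ← neg_neg (f k), hk2, neg_zero])
    have hk1 : ι k = x := congrArg Prod.fst hk
    rw [hk0, map_zero] at hk1
    rw [Submodule.mem_bot, ← hk1]
  -- the quotient map W → I ⧸ ι K
  have hq2cond : D ≤ LinearMap.ker ((LinearMap.range ι).mkQ.comp (LinearMap.fst A ↥I ↥M0)) := by
    rintro y ⟨k, rfl⟩
    show (LinearMap.range ι).mkQ (ι k) = 0
    rw [Submodule.mkQ_apply, Submodule.Quotient.mk_eq_zero]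
    exact ⟨k, rfl⟩
  let q2 : ((↥I × ↥M0) ⧸ D) →ₗ[A] ((I : Type u) ⧸ LinearMap.range ι) :=
    Submodule.liftQ D ((LinearMap.range ι).mkQ.comp (LinearMap.fst A ↥I ↥M0)) hq2cond
  have hq2surj : Function.Surjective q2 := by
    intro q
    obtain ⟨i, rfl⟩ := Submodule.mkQ_surjective _ q
    exact ⟨D.mkQ (i, 0), rfl⟩
  have hrange2 : LinearMap.range jM = LinearMap.ker q2 := by
    apply le_antisymm
    · rintro z ⟨x, rfl⟩
      show (LinearMap.range ι).mkQ ((0, x).1) = 0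
      rw [Submodule.mkQ_apply, Submodule.Quotient.mk_eq_zero]
      exact ⟨0, map_zero ι⟩
    · intro z hz
      obtain ⟨⟨i, x⟩, rfl⟩ := Submodule.mkQ_surjective _ z
      have h0 : (LinearMap.range ι).mkQ i = 0 := hz
      rw [Submodule.mkQ_apply, Submodule.Quotient.mk_eq_zero] at h0
      obtain ⟨k, rfl⟩ := h0
      refine ⟨x + f k, ?_⟩
      show D.mkQ (0, x + f k) = D.mkQ (ι k, x)
      rw [Submodule.mkQ_apply, Submodule.mkQ_apply, Submodule.Quotient.eq]
      refine ⟨-k, ?_⟩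
      rw [map_neg, hδ]
      refine Prod.ext ?_ ?_
      · show -(ι k) = 0 - ι k
        abel
      · show -(-(f k)) = (x + f k) - x
        abel
  -- the map u : W → X, and the splitting
  have hucond : D ≤ LinearMap.ker (g.comp (LinearMap.snd A ↥I ↥M0)) := by
    rintro y ⟨k, rfl⟩
    show g (-(f k)) = 0
    rw [map_neg, neg_eq_zero]
    exact LinearMap.mem_ker.mp (hfg ▸ LinearMap.mem_range_self f k)
  let uW : ((↥I × ↥M0) ⧸ D) →ₗ[A] (X : Type u) :=
    Submodule.liftQ D (g.comp (LinearMap.snd A ↥I ↥M0)) hucond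
  obtain ⟨r, hr⟩ := exists_retraction hE.1 jI hjIinj
  -- ker r ≃ X via uW
  have hub : Function.Bijective (uW.comp (LinearMap.ker r).subtype) := by
    constructor
    · rw [← LinearMap.ker_eq_bot, eq_bot_iff]
      rintro ⟨w, hwr⟩ hw
      obtain ⟨⟨i, x⟩, rfl⟩ := Submodule.mkQ_surjective _ w
      have h0 : g x = 0 := hw
      have : x ∈ LinearMap.range f := hfg.symm ▸ LinearMap.mem_ker.mpr h0
      obtain ⟨k, rfl⟩ := this
      -- (i, f k) = (i + ι k, 0) - δ k
      have hwj : D.mkQ (i, f k) = jI (i + ι k) := by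
        show D.mkQ (i, f k) = D.mkQ (i + ι k, 0)
        rw [Submodule.mkQ_apply, Submodule.mkQ_apply, Submodule.Quotient.eq]
        refine ⟨-k, ?_⟩
        rw [map_neg, hδ]
        refine Prod.ext ?_ ?_
        · show -(ι k) = i - (i + ι k)
          abel
        · show -(-(f k)) = f k - 0
          abel
      have hri : r (D.mkQ (i, f k)) = i + ι k := by rw [hwj, hr]
      have hr0 : r (D.mkQ (i, f k)) = 0 := hwr
      have : D.mkQ (i, f k) = 0 := by
        rw [hwj, ← map_zero jI]
        exact congrArg jI (by rw [← hri, hr0])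
      exact Subtype.ext this
    · intro x
      obtain ⟨x0, rfl⟩ := hg x
      have hwr : D.mkQ (0, x0) - jI (r (D.mkQ (0, x0))) ∈ LinearMap.ker r := by
        rw [LinearMap.mem_ker, map_sub, hr, sub_self]
      refine ⟨⟨_, hwr⟩, ?_⟩
      show uW (D.mkQ (0, x0) - jI (r (D.mkQ (0, x0)))) = g x0
      rw [map_sub]
      have h1 : uW (D.mkQ (0, x0)) = g x0 := rfl
      have h2 : ∀ i, uW (jI i) = 0 := fun i => by
        show g ((i, (0 : (M0 : Type u))).2) = 0
        rw [map_zero]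
      rw [h1, h2, sub_zero]
  -- assemble: X ⊕ I ≃ W
  have hsplit : (↥X × ↥I) ≃ₗ[A] ((↥I × ↥M0) ⧸ D) := by
    have e1 : (↥I × LinearMap.ker r) ≃ₗ[A] ((↥I × ↥M0) ⧸ D) := splitEquiv jI r hr
    have e2 : (LinearMap.ker r : Type u) ≃ₗ[A] (X : Type u) :=
      LinearEquiv.ofBijective (uW.comp (LinearMap.ker r).subtype) hub
    exact ((LinearEquiv.prodComm A ↥X ↥I).trans
      ((LinearEquiv.refl A ↥I).prodCongr e2.symm)).trans e1
  -- membership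
  have hCosK : Cos K ∈ bulletChain A (fun i => addOf A (Cos (N i))) n :=
    lemC hCos n N hN K hKc
  have hQ2 : ModuleCat.of A ((I : Type u) ⧸ LinearMap.range ι) ∈
      bulletChain A (fun i => addOf A (Cos (N i))) n :=
    chain_iso_closed cK hCosK
  have hWfin : Module.Finite A ((↥I × ↥M0) ⧸ D) := by
    have : Module.Finite A (↥I × ↥M0) := Module.Finite.prod
    exact Module.Finite.of_surjective D.mkQ (Submodule.mkQ_surjective D)
  exact memAdd_summand (↥I) hsplit
    (memAdd_self (W := ModuleCat.of A ((↥I × ↥M0) ⧸ D)) ⟨hWfin, M0,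
      ModuleCat.of A ((I : Type u) ⧸ LinearMap.range ι), jM, q2,
      addOf_self M0, hQ2, hjMinj, hq2surj, hrange2⟩)

end Aux

namespace Aux
open Paper
variable {A : Type u} [Ring A]
variable {Cos : ModuleCat.{u} A → ModuleCat.{u} A}

theorem cos_iter_finite (hCos : IsCosyzygyOp A Cos) :
    ∀ (i : ℕ) {M : ModuleCat.{u} A}, Module.Finite A M → Module.Finite A (Cos^[i] M) := by
  intro i
  induction i with
  | zero => intro M hM; exact hM
  | succ i ih =>
    intro M hM
    rw [Function.iterate_succ_apply]
    exact ih (cos_finite hCos hM)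

set_option maxHeartbeats 1600000 in
theorem mainChain (hCos : IsCosyzygyOp A Cos) : ∀ (n : ℕ) (X : ModuleCat.{u} A)
    (Ms : ℕ → ModuleCat.{u} A), (∀ i, Module.Finite A (Ms i)) →
    (∀ i, n < i → Subsingleton (Ms i)) →
    ∀ (d : ∀ i : ℕ, ((Ms (i+1) : Type u) →ₗ[A] (Ms i : Type u)))
      (e : (Ms 0 : Type u) →ₗ[A] (X : Type u)),
    Function.Surjective e →
    LinearMap.ker e = LinearMap.range (d 0) →
    (∀ i, LinearMap.ker (d i) = LinearMap.range (d (i+1))) →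
    X ∈ bulletChain A (fun i => addOf A (Cos^[i] (Ms i))) n := by
  intro n
  induction n with
  | zero =>
    intro X Ms hMs hbdd d e he hke hkd
    have h1 : Subsingleton (Ms 1) := hbdd 1 Nat.zero_lt_one
    have hr0 : LinearMap.range (d 0) = ⊥ := by
      rw [eq_bot_iff]
      rintro y ⟨x, rfl⟩
      have : x = 0 := Subsingleton.elim x 0
      rw [this, map_zero]
      exact Submodule.zero_mem ⊥
    have heinj : Function.Injective e := by
      rw [← LinearMap.ker_eq_bot, hke, hr0]
    have eq : (Ms 0 : Type u) ≃ₗ[A] (X : Type u) :=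
      LinearEquiv.ofBijective e ⟨heinj, he⟩
    show memAdd A (addOf A (Cos^[0] (Ms 0))) X
    exact memAdd_of_equiv eq (memAdd_self (addOf_self (Ms 0)))
  | succ n ih =>
    intro X Ms hMs hbdd d e he hke hkd
    have hKfin : Module.Finite A (LinearMap.ker e) := by
      have h1 : Module.Finite A (LinearMap.range (d 0)) :=
        Module.Finite.of_surjective ((d 0).rangeRestrict) (d 0).surjective_rangeRestrict
      rw [hke]
      exact h1
    let K : ModuleCat.{u} A := ModuleCat.of A (LinearMap.ker e)
    let e' : (Ms 1 : Type u) →ₗ[A] (K : Type u) :=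
      (d 0).codRestrict (LinearMap.ker e) (fun c => by rw [hke]; exact ⟨c, rfl⟩)
    have he' : Function.Surjective e' := by
      rintro ⟨y, hy⟩
      rw [hke] at hy
      obtain ⟨x, hx⟩ := hy
      exact ⟨x, Subtype.ext hx⟩
    have hke' : LinearMap.ker e' = LinearMap.range (d 1) := by
      rw [LinearMap.ker_codRestrict]
      exact hkd 0
    have ihK := ih K (fun i => Ms (i+1)) (fun i => hMs (i+1))
      (fun i hi => hbdd (i+1) (by omega)) (fun i => d (i+1)) e' he' hke'
      (fun i => hkd (i+1))
    have hres := lemL (Cos := Cos) hCos n (fun i => Cos^[i] (Ms (i+1)))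
      (fun i => cos_iter_finite hCos i (hMs (i+1))) (hMs 0)
      ((LinearMap.ker e).subtype) e (Submodule.injective_subtype _) he
      (Submodule.range_subtype _) ihK
    have hfun : (fun i => addOf A (Cos (Cos^[i] (Ms (i+1))))) =
        (fun i => addOf A (Cos^[i+1] (Ms (i+1)))) := by
      funext i
      rw [Function.iterate_succ_apply']
    rw [hfun] at hres
    show X ∈ bullet A (addOf A (Cos^[0] (Ms 0)))
      (bulletChain A (fun i => addOf A (Cos^[i+1] (Ms (i+1)))) n)
    exact hres

theorem chain2bracket : ∀ (n : ℕ) (S : ℕ → Set (ModuleCat.{u} A)) (T : ModuleCat.{u} A),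
    (∀ i, i ≤ n → S i ⊆ addOf A T) → ∀ X ∈ bulletChain A S n, X ∈ bracket A T (n+1) := by
  intro n
  induction n with
  | zero =>
    intro S T h X hX
    exact memAdd_trans hX (fun W hW => h 0 (le_refl 0) hW)
  | succ n ih =>
    intro S T h X hX
    refine memAdd_mono ?_ hX
    rintro V ⟨hfin, T1, T2, u, v, h1, h2, hses⟩
    exact ⟨hfin, T1, T2, u, v, h 0 (by omega) h1,
      ih (fun i => S (i+1)) T (fun i hi => h (i+1) (by omega)) T2 h2, hses⟩

theorem pi_factor_addOf {m : ℕ} (Z : Fin m → ModuleCat.{u} A) (i0 : Fin m) :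
    Z i0 ∈ addOf A (ModuleCat.of A (∀ i, (Z i : Type u))) := by
  classical
  let s : (Z i0 : Type u) →ₗ[A] (∀ i, (Z i : Type u)) :=
    LinearMap.single A (fun i => (Z i : Type u)) i0
  let p : (∀ i, (Z i : Type u)) →ₗ[A] (Z i0 : Type u) := LinearMap.proj i0
  have h : ∀ x, p (s x) = x := fun x => by simp [s, p]
  exact memAdd_summand (LinearMap.ker p) (splitEquiv s p h) (memAdd_self rfl)

end Aux

open Paper in
/-- Given an exact sequence `0 → M_n → ⋯ → M_0 → X → 0` of finitely
generated modules over an Artin algebra, `X ∈ [M₀]₁ • [Ω^{-1}(M₁)]₁ • ⋯ • [Ω^{-n}(M_n)]₁`,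
and in particular `X ∈ [⊕_{i=0}^n Ω^{-i}(M_i)]_{n+1}`. -/
theorem stmt4 (k : Type u) [CommRing k] [IsArtinianRing k]
    (A : Type u) [Ring A] [Algebra k A] [Module.Finite k A]
    (Cos : ModuleCat.{u} A → ModuleCat.{u} A) (hCos : IsCosyzygyOp A Cos)
    (n : ℕ) (X : ModuleCat.{u} A) (hX : Module.Finite A X)
    (Ms : ℕ → ModuleCat.{u} A) (hMs : ∀ i, Module.Finite A (Ms i))
    (hbdd : ∀ i, n < i → Subsingleton (Ms i))
    (d : (i : ℕ) → (Ms (i+1) →ₗ[A] Ms i)) (e : Ms 0 →ₗ[A] X)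
    (he : Function.Surjective e)
    (hke : LinearMap.ker e = LinearMap.range (d 0))
    (hkd : ∀ i, LinearMap.ker (d i) = LinearMap.range (d (i+1))) :
    X ∈ bulletChain A (fun i => addOf A (Cos^[i] (Ms i))) n ∧
      X ∈ bracket A
        (ModuleCat.of A ((i : Fin (n+1)) → (Cos^[i.1] (Ms i.1) : Type u))) (n+1) := by
  have hchain := Aux.mainChain hCos n X Ms hMs hbdd d e he hke hkd
  refine ⟨hchain, ?_⟩
  refine Aux.chain2bracket n _ _ ?_ X hchain
  intro i hi
  exact Aux.addOf_subset_of_mem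
    (Aux.pi_factor_addOf (fun j : Fin (n+1) => Cos^[j.1] (Ms j.1)) ⟨i, by omega⟩)
end

section
/- Let A be an Artin algebra. Two bounded radical complexes X• and Y• over A-mod are isomorphic in the homotopy category K(A) if and only if they are isomorphic in the category of complexes C(A). -/
universe u

open CategoryTheory

/-- A radical homomorphism of modules: no composite `Z → M → N → Z` through a
nonzero (finitely generated) module `Z` is an isomorphism. -/
def Paper.IsRadicalHom (A : Type u) [Ring A] {M N : ModuleCat.{u} A}
    (f : M →ₗ[A] N) : Prop :=
  ∀ (Z : ModuleCat.{u} A), Module.Finite A Z → Nontrivial Z →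
    ∀ (h : Z →ₗ[A] M) (g : N →ₗ[A] Z),
      ¬ Function.Bijective (g ∘ₗ f ∘ₗ h)

section Auxiliary

open Paper

/-- A surjective endomorphism of a finitely generated module over an Artin algebra
is injective (via the Orzech property of the commutative base ring). -/
lemma aux_surj_inj {k A : Type u} [CommRing k] [Ring A] [Algebra k A] [Module.Finite k A]
    {M : Type u} [AddCommGroup M] [Module A M] [Module.Finite A M]
    (c : M →ₗ[A] M) (hs : Function.Surjective c) : Function.Injective c := by
  letI : Module k M := Module.compHom M (algebraMap k A)
  haveI : IsScalarTower k A M :=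
    ⟨fun r a m => by
      show (r • a) • m = algebraMap k A r • (a • m)
      rw [Algebra.smul_def, mul_smul]⟩
  haveI : Module.Finite k M := Module.Finite.trans A M
  let ck : M →ₗ[k] M :=
    { toFun := c
      map_add' := c.map_add
      map_smul' := fun r x => by
        show c (algebraMap k A r • x) = algebraMap k A r • c x
        exact c.map_smul _ _ }
  exact OrzechProperty.injective_of_surjective_endomorphism ck hs

/-- Any composite through a radical homomorphism is a nilpotent endomorphism. -/
lemma aux_rad_nilp {k A : Type u} [CommRing k] [IsArtinianRing k] [Ring A] [Algebra k A]
    [Module.Finite k A]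
    {M N B : ModuleCat.{u} A} [Module.Finite A B]
    {f : M →ₗ[A] N} (hf : IsRadicalHom A f) (w : B →ₗ[A] M) (u : N →ₗ[A] B) :
    IsNilpotent (u ∘ₗ f ∘ₗ w : Module.End A B) := by
  haveI : IsArtinianRing A := IsArtinianRing.of_finite k A
  by_contra hnil
  set e : Module.End A B := u ∘ₗ f ∘ₗ w with he
  obtain ⟨n, hr⟩ := IsArtinian.monotone_stabilizes e.iterateRange
  have hrange : ∀ m, n ≤ m → LinearMap.range (e ^ n) = LinearMap.range (e ^ m) :=
    fun m hm => hr m hm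
  set Z : Submodule A B := LinearMap.range (e ^ n) with hZ
  have hZne : Z ≠ ⊥ := by
    intro h
    exact hnil ⟨n, LinearMap.range_eq_bot.mp h⟩
  haveI : Nontrivial Z := Submodule.nontrivial_iff_ne_bot.mpr hZne
  haveI hfg : Module.Finite A Z := by
    apply Module.Finite.iff_fg.mpr
    rw [hZ, LinearMap.range_eq_map]
    exact Submodule.FG.map _ (Module.finite_def.mp ‹Module.Finite A B›)
  let h0 : Z →ₗ[A] M := w ∘ₗ (e ^ n) ∘ₗ Z.subtype
  let g0 : N →ₗ[A] Z :=
    LinearMap.codRestrict Z ((e ^ n) ∘ₗ u) (fun x => LinearMap.mem_range_self _ _)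
  have hcomp : ∀ z : Z, ((g0 ∘ₗ f ∘ₗ h0) z : B) = (e ^ (2*n+1)) (z : B) := by
    intro z
    show (e ^ n) (u (f (w ((e ^ n) (z : B))))) = (e ^ (2*n+1)) (z : B)
    have h1 : u (f (w ((e ^ n) (z : B)))) = e ((e ^ n) (z : B)) := rfl
    have h2 : e ^ (2*n+1) = (e ^ n) * (e * e ^ n) := by
      rw [show 2*n+1 = n + (1 + n) by ring, pow_add, pow_add, pow_one]
    rw [h1, h2]
    rfl
  have hsurj : Function.Surjective (g0 ∘ₗ f ∘ₗ h0) := by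
    rintro ⟨z, hz⟩
    have hz2 : z ∈ LinearMap.range (e ^ (3*n+1)) := by
      rw [← hrange (3*n+1) (by omega)]; exact hz
    obtain ⟨x, hx⟩ := hz2
    refine ⟨⟨(e ^ n) x, LinearMap.mem_range_self _ _⟩, ?_⟩
    apply Subtype.ext
    rw [hcomp]
    show (e ^ (2*n+1)) ((e ^ n) x) = z
    rw [← hx]
    rw [show 3*n+1 = (2*n+1) + n by ring, pow_add e (2*n+1) n, Module.End.mul_apply]
  have hbij : Function.Bijective (g0 ∘ₗ f ∘ₗ h0) :=
    ⟨aux_surj_inj (k := k) _ hsurj, hsurj⟩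
  exact hf (ModuleCat.of A Z) hfg ‹Nontrivial Z› h0 g0 hbij

/-- The set of elements `x` with `1 - y * x` always a unit is closed under addition. -/
lemma aux_jset_add {R : Type*} [Ring R] {a b : R}
    (ha : ∀ y, IsUnit (1 - y * a)) (hb : ∀ y, IsUnit (1 - y * b)) :
    ∀ y : R, IsUnit (1 - y * (a + b)) := by
  intro y
  obtain ⟨v, hv⟩ := ha y
  have hvu : (1 - y * a) * ↑v⁻¹ = 1 := by rw [← hv]; exact v.mul_inv
  have h1 : (1 - y * a) * (1 - (↑v⁻¹ * y) * b) = (1 : R) - y * (a + b) := by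
    calc (1 - y * a) * (1 - (↑v⁻¹ * y) * b)
        = (1 - y * a) - ((1 - y * a) * ↑v⁻¹) * (y * b) := by noncomm_ring
      _ = 1 - y * (a + b) := by rw [hvu]; noncomm_ring
  rw [← h1]
  exact (ha y).mul (hb (↑v⁻¹ * y))

/-- A module map which is a unit of the endomorphism ring is an isomorphism. -/
lemma aux_isIso_of_isUnit {A : Type u} [Ring A] {M : ModuleCat.{u} A} (e : Module.End A M)
    (h : IsUnit e) : CategoryTheory.IsIso (X := M) (Y := M) (ModuleCat.ofHom e) := by
  obtain ⟨v, hv⟩ := h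
  refine ⟨ModuleCat.ofHom (↑v⁻¹ : Module.End A M), ?_, ?_⟩
  · apply ModuleCat.hom_ext
    show (↑v⁻¹ : Module.End A M) * e = 1
    rw [← hv, v.inv_mul]
  · apply ModuleCat.hom_ext
    show e * (↑v⁻¹ : Module.End A M) = 1
    rw [← hv, v.mul_inv]

open Paper CategoryTheory in
/-- If an endomorphism of a radical complex is homotopic to the identity then it is
an isomorphism in every degree. -/
lemma aux_deg_iso {k A : Type u} [CommRing k] [IsArtinianRing k] [Ring A] [Algebra k A]
    [Module.Finite k A]
    (X : CochainComplex (ModuleCat.{u} A) ℤ)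
    (hXfin : ∀ i, Module.Finite A (X.X i))
    (hXrad : ∀ i : ℤ, IsRadicalHom A (X.d i (i+1)).hom)
    (φ : X ⟶ X) (H : Homotopy φ (𝟙 X)) (i : ℤ) : IsIso (φ.f i) := by
  haveI := hXfin i
  apply aux_isIso_of_isUnit (M := X.X i) (φ.f i).hom
  have hrad1 : IsRadicalHom A (X.d (i-1) i).hom := by
    have h := hXrad (i-1)
    rwa [show i - 1 + 1 = i by ring] at h
  have hcomm := H.comm i
  rw [dNext_eq H.hom (show (ComplexShape.up ℤ).Rel i (i+1) by simp),
      prevD_eq H.hom (show (ComplexShape.up ℤ).Rel (i-1) i by simp)] at hcomm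
  set a : Module.End A (X.X i) := (H.hom (i+1) i).hom.comp (X.d i (i+1)).hom with hA
  set b : Module.End A (X.X i) := LinearMap.comp (X.d (i-1) i).hom (H.hom i (i-1)).hom with hB
  have ha : ∀ y : Module.End A (X.X i), IsUnit (1 - y * a) := by
    intro y
    have h1 : y * a = ((y ∘ₗ (H.hom (i+1) i).hom) ∘ₗ (X.d i (i+1)).hom ∘ₗ
        (LinearMap.id : X.X i →ₗ[A] X.X i)) := by
      rw [hA]; ext x; rfl
    rw [h1]
    exact (aux_rad_nilp (k := k) (hXrad i) LinearMap.id
      (y ∘ₗ (H.hom (i+1) i).hom)).isUnit_one_sub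
  have hb : ∀ y : Module.End A (X.X i), IsUnit (1 - y * b) := by
    intro y
    have h1 : y * b = (y ∘ₗ (X.d (i-1) i).hom ∘ₗ
        (H.hom i (i-1)).hom) := by
      rw [hB]; ext x; rfl
    rw [h1]
    exact (aux_rad_nilp (k := k) hrad1 (H.hom i (i-1)).hom y).isUnit_one_sub
  have hsum := aux_jset_add ha hb (-1)
  have key : @Eq (Module.End A (X.X i)) (φ.f i).hom (a + b + 1) := by
    rw [hA, hB, hcomm]
    rfl
  rw [key, show (a + b + 1 : Module.End A (X.X i)) = 1 - (-1) * (a + b) by noncomm_ring]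
  exact hsum

end Auxiliary

open Paper CategoryTheory in
/-- Two bounded radical complexes of finitely generated modules over
an Artin algebra are isomorphic in the homotopy category `K(A)` iff they are
isomorphic in the category of complexes `C(A)`. -/
theorem stmt13 (k : Type u) [CommRing k] [IsArtinianRing k]
    (A : Type u) [Ring A] [Algebra k A] [Module.Finite k A]
    (X Y : CochainComplex (ModuleCat.{u} A) ℤ)
    (hXfin : ∀ i, Module.Finite A (X.X i)) (hYfin : ∀ i, Module.Finite A (Y.X i))
    (hXbdd : ∃ a b : ℤ, ∀ i, (i < a ∨ b < i) → Subsingleton (X.X i))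
    (hYbdd : ∃ a b : ℤ, ∀ i, (i < a ∨ b < i) → Subsingleton (Y.X i))
    (hXrad : ∀ i : ℤ, IsRadicalHom A (X.d i (i+1)).hom)
    (hYrad : ∀ i : ℤ, IsRadicalHom A (Y.d i (i+1)).hom) :
    Nonempty (((HomotopyCategory.quotient (ModuleCat.{u} A)
        (ComplexShape.up ℤ)).obj X ≅
      (HomotopyCategory.quotient (ModuleCat.{u} A) (ComplexShape.up ℤ)).obj Y))
      ↔ Nonempty (X ≅ Y) := by
  constructor
  · rintro ⟨i⟩
    let E := HomotopyCategory.homotopyEquivOfIso i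
    haveI h1 : ∀ n, IsIso ((E.hom ≫ E.inv).f n) := fun n =>
      aux_deg_iso (k := k) X hXfin hXrad (E.hom ≫ E.inv) E.homotopyHomInvId n
    haveI h2 : ∀ n, IsIso ((E.inv ≫ E.hom).f n) := fun n =>
      aux_deg_iso (k := k) Y hYfin hYrad (E.inv ≫ E.hom) E.homotopyInvHomId n
    haveI hfg : IsIso (E.hom ≫ E.inv) := HomologicalComplex.Hom.isIso_of_components _
    haveI hgf : IsIso (E.inv ≫ E.hom) := HomologicalComplex.Hom.isIso_of_components _
    have hfiso : IsIso E.hom := by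
      set l : Y ⟶ X := E.inv ≫ CategoryTheory.inv (E.hom ≫ E.inv) with hl
      set r : Y ⟶ X := CategoryTheory.inv (E.inv ≫ E.hom) ≫ E.inv with hr
      have hl1 : E.hom ≫ l = 𝟙 X := by
        rw [hl, ← Category.assoc, IsIso.hom_inv_id]
      have hr1 : r ≫ E.hom = 𝟙 Y := by
        rw [hr, Category.assoc, IsIso.inv_hom_id]
      have hlr : l = r := by
        rw [← Category.id_comp l, ← hr1, Category.assoc, hl1, Category.comp_id]
      exact ⟨⟨l, hl1, by rw [hlr]; exact hr1⟩⟩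
    exact ⟨asIso E.hom⟩
  · rintro ⟨i⟩
    exact ⟨(HomotopyCategory.quotient (ModuleCat.{u} A) (ComplexShape.up ℤ)).mapIso i⟩
end
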